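/- arXiv:2602.10673 — 2 statements merged into one kernel-verified Lean document; each statement's English description precedes it below -/
import Mathlib

section
/- Let (Y₁, Y₂) follow the bivariate zero-inflated Poisson log-normal model with parameters (π₁, π₂, μ₁, μ₂, c₁, c₂), and let σ₁₂ = c₁·c₂. Then the covariance Cov(Y₁, Y₂) has the same sign as σ₁₂: Cov(Y₁, Y₂) > 0 if σ₁₂ > 0, Cov(Y₁, Y₂) = 0 if σ₁₂ = 0, and Cov(Y₁, Y₂) < 0 if σ₁₂ < 0. -/
/-! Conditionally on the latent Gaussian vector `w`, the two counts are independent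
zero-inflated Poisson variables with means `π_j e^{X_j}`, where `X_j = μ_j + c_j·w`.
Exchanging sum and integral (all terms are nonnegative) gives
`E[Y₁Y₂] = π₁π₂ E[e^{X₁ + X₂}]`, and the Gaussian moment generating function evaluates this
to `E₁E₂ e^{σ₁₂}`. Hence `Cov(Y₁, Y₂) = E₁E₂ (e^{σ₁₂} - 1)` with `E₁E₂ > 0`. -/

open MeasureTheory ProbabilityTheory Real

/-- The joint probability mass function of the bivariate zero-inflated Poisson
log-normal model with parameters (π₁, π₂, μ₁, μ₂, c₁, c₂):
`p(y₁, y₂) = ∫_{ℝ^q} ∏_{j=1,2} [(1−π_j)·1{y_j=0} +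
  π_j·exp(−e^{μ_j + c_j·w})·e^{(μ_j + c_j·w)·y_j}/y_j!] dΓ(w)`,
where `Γ` is the q-fold product of standard Gaussian measures on ℝ.
Here `pr₁`, `pr₂` play the role of the probabilities π₁, π₂. -/
noncomputable def biziplnPMF {q : ℕ} (c₁ c₂ : Fin q → ℝ) (pr₁ pr₂ μ₁ μ₂ : ℝ)
    (y₁ y₂ : ℕ) : ℝ :=
  ∫ w : Fin q → ℝ,
    ((1 - pr₁) * (if y₁ = 0 then 1 else 0) +
      pr₁ * (exp (-exp (μ₁ + ∑ i, c₁ i * w i)) * exp ((μ₁ + ∑ i, c₁ i * w i) * y₁)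
        / (Nat.factorial y₁))) *
    ((1 - pr₂) * (if y₂ = 0 then 1 else 0) +
      pr₂ * (exp (-exp (μ₂ + ∑ i, c₂ i * w i)) * exp ((μ₂ + ∑ i, c₂ i * w i) * y₂)
        / (Nat.factorial y₂)))
    ∂(Measure.pi fun _ : Fin q => gaussianReal 0 1)

open scoped Nat NNReal

/-- `p` is the weight of the Poisson component, like `π_j` in the model. -/
noncomputable def zeroInflatedPoissonPMFReal (p r : ℝ) (n : ℕ) : ℝ :=
  (1 - p) * (if n = 0 then 1 else 0) + p * (exp (-r) * r ^ n / n !)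

lemma zeroInflatedPoissonPMFReal_nonneg {p r : ℝ} (hp₀ : 0 ≤ p) (hp₁ : p ≤ 1) (hr : 0 ≤ r)
    (n : ℕ) : 0 ≤ zeroInflatedPoissonPMFReal p r n := by
  have : 0 ≤ 1 - p := sub_nonneg.2 hp₁
  unfold zeroInflatedPoissonPMFReal
  positivity

lemma measurable_zeroInflatedPoissonPMFReal (p : ℝ) (n : ℕ) :
    Measurable fun r ↦ zeroInflatedPoissonPMFReal p r n := by
  unfold zeroInflatedPoissonPMFReal
  fun_prop

lemma hasSum_mul_poisson (r : ℝ) : HasSum (fun n : ℕ ↦ n * (exp (-r) * r ^ n / n !)) r := by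
  have hterm : ∀ n : ℕ, ((n + 1 : ℕ) : ℝ) * (exp (-r) * r ^ (n + 1) / (n + 1)!)
      = exp (-r) * r * (r ^ n / n !) := by
    intro n
    rw [Nat.factorial_succ, Nat.cast_mul, pow_succ]
    have : (n ! : ℝ) ≠ 0 := by positivity
    have : ((n + 1 : ℕ) : ℝ) ≠ 0 := by positivity
    field_simp
  have hexp : exp (-r) * r * exp r = r := by
    rw [mul_right_comm, ← exp_add, neg_add_cancel, exp_zero, one_mul]
  have hshift := (NormedSpace.expSeries_div_hasSum_exp r).mul_left (exp (-r) * r)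
  rw [← exp_eq_exp_ℝ, hexp] at hshift
  simp_rw [← hterm] at hshift
  simpa using (hasSum_nat_add_iff (f := fun n : ℕ ↦ (n : ℝ) * (exp (-r) * r ^ n / n !)) 1).1 hshift

lemma hasSum_mul_zeroInflatedPoissonPMFReal (p r : ℝ) :
    HasSum (fun n : ℕ ↦ n * zeroInflatedPoissonPMFReal p r n) (p * r) := by
  have hterm : ∀ n : ℕ, n * zeroInflatedPoissonPMFReal p r n
      = p * (n * (exp (-r) * r ^ n / n !)) := by
    intro n
    rcases n.eq_zero_or_pos with rfl | hn
    · simp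
    · rw [zeroInflatedPoissonPMFReal, if_neg hn.ne']
      ring
  simpa only [hterm] using (hasSum_mul_poisson r).mul_left p

lemma HasSum.mul_real {ι κ : Type*} {f : ι → ℝ} {g : κ → ℝ} {a b : ℝ} (hf : HasSum f a)
    (hg : HasSum g b) :
    HasSum (fun x : ι × κ ↦ f x.1 * g x.2) (a * b) :=
  hf.mul hg (summable_mul_of_summable_norm hf.summable.norm hg.summable.norm)

lemma hasSum_integral_of_nonneg {α ι : Type*} [MeasurableSpace α] {μ : Measure α} [Countable ι]
    {F : ι → α → ℝ} {g : α → ℝ} (hF_meas : ∀ i, AEStronglyMeasurable (F i) μ)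
    (hF_nonneg : ∀ i x, 0 ≤ F i x) (h_sum : ∀ x, HasSum (F · x) (g x)) (hg : Integrable g μ) :
    HasSum (fun i ↦ ∫ x, F i x ∂μ) (∫ x, g x ∂μ) := by
  refine hasSum_integral_of_dominated_convergence F hF_meas
    (fun i ↦ ae_of_all _ fun x ↦ (Real.norm_of_nonneg (hF_nonneg i x)).le)
    (ae_of_all _ fun x ↦ (h_sum x).summable) ?_ (ae_of_all _ h_sum)
  simpa only [fun x ↦ (h_sum x).tsum_eq] using hg

lemma hasSum_mul_mul_integral_zeroInflatedPoissonPMFReal {α : Type*} [MeasurableSpace α]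
    {ν : Measure α} {p₁ p₂ : ℝ} (hp₁ : p₁ ∈ Set.Icc 0 1) (hp₂ : p₂ ∈ Set.Icc 0 1)
    {r₁ r₂ : α → ℝ} (hr₁ : AEMeasurable r₁ ν) (hr₂ : AEMeasurable r₂ ν)
    (hr₁_nonneg : ∀ x, 0 ≤ r₁ x) (hr₂_nonneg : ∀ x, 0 ≤ r₂ x)
    (hint : Integrable (fun x ↦ r₁ x * r₂ x) ν) :
    HasSum (fun y : ℕ × ℕ ↦ y.1 * y.2 *
        ∫ x, zeroInflatedPoissonPMFReal p₁ (r₁ x) y.1 * zeroInflatedPoissonPMFReal p₂ (r₂ x) y.2 ∂ν)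
      (p₁ * p₂ * ∫ x, r₁ x * r₂ x ∂ν) := by
  set F : ℕ × ℕ → α → ℝ := fun y x ↦ (y.1 * zeroInflatedPoissonPMFReal p₁ (r₁ x) y.1)
    * (y.2 * zeroInflatedPoissonPMFReal p₂ (r₂ x) y.2)
  have hF_meas (y : ℕ × ℕ) : AEStronglyMeasurable (F y) ν :=
    (((measurable_zeroInflatedPoissonPMFReal p₁ y.1).comp_aemeasurable hr₁).const_mul _ |>.mul
      (((measurable_zeroInflatedPoissonPMFReal p₂ y.2).comp_aemeasurable hr₂).const_mul _))
      |>.aestronglyMeasurable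
  have hF_nonneg (y : ℕ × ℕ) (x : α) : 0 ≤ F y x := mul_nonneg
    (mul_nonneg y.1.cast_nonneg (zeroInflatedPoissonPMFReal_nonneg hp₁.1 hp₁.2 (hr₁_nonneg x) _))
    (mul_nonneg y.2.cast_nonneg (zeroInflatedPoissonPMFReal_nonneg hp₂.1 hp₂.2 (hr₂_nonneg x) _))
  have hF_sum (x : α) : HasSum (F · x) (p₁ * r₁ x * (p₂ * r₂ x)) :=
    (hasSum_mul_zeroInflatedPoissonPMFReal p₁ (r₁ x)).mul_real
      (hasSum_mul_zeroInflatedPoissonPMFReal p₂ (r₂ x))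
  have h := hasSum_integral_of_nonneg hF_meas hF_nonneg hF_sum
    (by simpa only [mul_mul_mul_comm] using hint.const_mul (p₁ * p₂))
  convert h using 1
  · ext y
    rw [← integral_const_mul]
    congr with x
    ring
  · rw [← integral_const_mul]
    congr with x
    ring

lemma integrable_exp_sum_mul_pi_gaussianReal {ι : Type*} [Fintype ι] (m : ℝ) (v : ℝ≥0)
    (a : ι → ℝ) :
    Integrable (fun w : ι → ℝ ↦ exp (∑ i, a i * w i)) (Measure.pi fun _ ↦ gaussianReal m v) := by
  simp_rw [exp_sum]
  exact Integrable.fintype_prod (f := fun i x ↦ exp (a i * x))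
    fun i ↦ integrable_exp_mul_gaussianReal (a i)

lemma integral_exp_sum_mul_pi_gaussianReal {ι : Type*} [Fintype ι] (m : ℝ) (v : ℝ≥0)
    (a : ι → ℝ) :
    ∫ w : ι → ℝ, exp (∑ i, a i * w i) ∂(Measure.pi fun _ ↦ gaussianReal m v)
      = exp (∑ i, (m * a i + v * a i ^ 2 / 2)) := by
  simp_rw [exp_sum]
  rw [integral_fintype_prod_eq_prod (fun i x ↦ exp (a i * x))]
  exact Finset.prod_congr rfl fun i _ ↦ congrFun (mgf_id_gaussianReal (μ := m) (v := v)) (a i)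

lemma exp_add_sum_mul_exp_add_sum {ι : Type*} [Fintype ι] (μ₁ μ₂ : ℝ) (c₁ c₂ w : ι → ℝ) :
    exp (μ₁ + ∑ i, c₁ i * w i) * exp (μ₂ + ∑ i, c₂ i * w i)
      = exp (μ₁ + μ₂) * exp (∑ i, (c₁ i + c₂ i) * w i) := by
  simp only [add_mul, Finset.sum_add_distrib, ← exp_add]
  ring_nf

lemma integrable_exp_mul_exp_pi_gaussianReal {ι : Type*} [Fintype ι] (μ₁ μ₂ : ℝ)
    (c₁ c₂ : ι → ℝ) :
    Integrable (fun w : ι → ℝ ↦ exp (μ₁ + ∑ i, c₁ i * w i) * exp (μ₂ + ∑ i, c₂ i * w i))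
      (Measure.pi fun _ ↦ gaussianReal 0 1) := by
  simp_rw [exp_add_sum_mul_exp_add_sum]
  exact (integrable_exp_sum_mul_pi_gaussianReal 0 1 _).const_mul _

lemma integral_exp_mul_exp_pi_gaussianReal {ι : Type*} [Fintype ι] (μ₁ μ₂ : ℝ)
    (c₁ c₂ : ι → ℝ) :
    ∫ w : ι → ℝ, exp (μ₁ + ∑ i, c₁ i * w i) * exp (μ₂ + ∑ i, c₂ i * w i)
        ∂(Measure.pi fun _ ↦ gaussianReal 0 1)
      = exp (μ₁ + (∑ i, c₁ i ^ 2) / 2) * exp (μ₂ + (∑ i, c₂ i ^ 2) / 2)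
          * exp (∑ i, c₁ i * c₂ i) := by
  have hsq : ∑ i, (0 * (c₁ i + c₂ i) + ((1 : ℝ≥0) : ℝ) * (c₁ i + c₂ i) ^ 2 / 2)
      = (∑ i, c₁ i ^ 2) / 2 + (∑ i, c₂ i ^ 2) / 2 + ∑ i, c₁ i * c₂ i := by
    rw [Finset.sum_div, Finset.sum_div, ← Finset.sum_add_distrib, ← Finset.sum_add_distrib]
    exact Finset.sum_congr rfl fun i _ ↦ by push_cast; ring
  simp_rw [exp_add_sum_mul_exp_add_sum]
  rw [integral_const_mul, integral_exp_sum_mul_pi_gaussianReal, hsq]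
  simp only [← exp_add]
  ring_nf

lemma biziplnPMF_eq_integral {q : ℕ} (c₁ c₂ : Fin q → ℝ) (pr₁ pr₂ μ₁ μ₂ : ℝ) (y₁ y₂ : ℕ) :
    biziplnPMF c₁ c₂ pr₁ pr₂ μ₁ μ₂ y₁ y₂
      = ∫ w : Fin q → ℝ, zeroInflatedPoissonPMFReal pr₁ (exp (μ₁ + ∑ i, c₁ i * w i)) y₁
          * zeroInflatedPoissonPMFReal pr₂ (exp (μ₂ + ∑ i, c₂ i * w i)) y₂
          ∂(Measure.pi fun _ : Fin q ↦ gaussianReal 0 1) := by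
  unfold biziplnPMF zeroInflatedPoissonPMFReal
  congr with w
  rw [mul_comm _ (y₁ : ℝ), mul_comm _ (y₂ : ℝ), exp_nat_mul, exp_nat_mul]

theorem bizipln_covariance_sign_general {q : ℕ} (c₁ c₂ : Fin q → ℝ)
    (pr₁ pr₂ μ₁ μ₂ : ℝ)
    (hpr₁ : pr₁ ∈ Set.Ioc (0 : ℝ) 1) (hpr₂ : pr₂ ∈ Set.Ioc (0 : ℝ) 1)
    (σ₁₂ E₁ E₂ cov : ℝ)
    (hσ₁₂ : σ₁₂ = ∑ i, c₁ i * c₂ i)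
    (hE₁ : E₁ = pr₁ * exp (μ₁ + (∑ i, c₁ i ^ 2) / 2))
    (hE₂ : E₂ = pr₂ * exp (μ₂ + (∑ i, c₂ i ^ 2) / 2))
    (hcov : cov = (∑' y : ℕ × ℕ,
        (y.1 : ℝ) * (y.2 : ℝ) * biziplnPMF c₁ c₂ pr₁ pr₂ μ₁ μ₂ y.1 y.2) - E₁ * E₂) :
    (0 < σ₁₂ → 0 < cov) ∧ (σ₁₂ = 0 → cov = 0) ∧ (σ₁₂ < 0 → cov < 0) := by
  have hmoment : HasSum (fun y : ℕ × ℕ ↦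
      (y.1 : ℝ) * (y.2 : ℝ) * biziplnPMF c₁ c₂ pr₁ pr₂ μ₁ μ₂ y.1 y.2) (E₁ * E₂ * exp σ₁₂) := by
    have h := hasSum_mul_mul_integral_zeroInflatedPoissonPMFReal (Set.Ioc_subset_Icc_self hpr₁)
      (Set.Ioc_subset_Icc_self hpr₂) (by fun_prop : Measurable _).aemeasurable
      (by fun_prop : Measurable _).aemeasurable (fun _ ↦ (exp_pos _).le)
      (fun _ ↦ (exp_pos _).le) (integrable_exp_mul_exp_pi_gaussianReal μ₁ μ₂ c₁ c₂)
    rw [integral_exp_mul_exp_pi_gaussianReal] at h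
    simp only [biziplnPMF_eq_integral, hE₁, hE₂, hσ₁₂]
    convert h using 1
    ring
  have hcov_eq : cov = E₁ * E₂ * (exp σ₁₂ - 1) := by
    rw [hcov, hmoment.tsum_eq]
    ring
  have hE : 0 < E₁ * E₂ := by
    rw [hE₁, hE₂]
    exact mul_pos (mul_pos hpr₁.1 (exp_pos _)) (mul_pos hpr₂.1 (exp_pos _))
  rw [hcov_eq]
  refine ⟨fun h ↦ ?_, fun h ↦ ?_, fun h ↦ ?_⟩
  · exact mul_pos hE (sub_pos.2 (one_lt_exp_iff.2 h))
  · rw [h, exp_zero, sub_self, mul_zero]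
  · exact mul_neg_of_pos_of_neg hE (sub_neg.2 (exp_lt_one_iff.2 h))

/-- In the bivariate zero-inflated Poisson log-normal model, the covariance
`Cov(Y₁, Y₂) = ∑ y₁·y₂·p(y₁,y₂) − E₁·E₂` has the same sign as `σ₁₂ = c₁·c₂`. -/
theorem bizipln_covariance_sign {q : ℕ} (hq : 1 ≤ q) (c₁ c₂ : Fin q → ℝ)
    (pr₁ pr₂ μ₁ μ₂ : ℝ)
    (hpr₁ : pr₁ ∈ Set.Ioc (0 : ℝ) 1) (hpr₂ : pr₂ ∈ Set.Ioc (0 : ℝ) 1)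
    (σ₁₂ E₁ E₂ cov : ℝ)
    (hσ₁₂ : σ₁₂ = ∑ i, c₁ i * c₂ i)
    (hE₁ : E₁ = pr₁ * exp (μ₁ + (∑ i, c₁ i ^ 2) / 2))
    (hE₂ : E₂ = pr₂ * exp (μ₂ + (∑ i, c₂ i ^ 2) / 2))
    (hcov : cov = (∑' y : ℕ × ℕ,
        (y.1 : ℝ) * (y.2 : ℝ) * biziplnPMF c₁ c₂ pr₁ pr₂ μ₁ μ₂ y.1 y.2) - E₁ * E₂) :
    (0 < σ₁₂ → 0 < cov) ∧ (σ₁₂ = 0 → cov = 0) ∧ (σ₁₂ < 0 → cov < 0) :=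
  bizipln_covariance_sign_general c₁ c₂ pr₁ pr₂ μ₁ μ₂ hpr₁ hpr₂ σ₁₂ E₁ E₂ cov hσ₁₂ hE₁ hE₂ hcov
end

section
/- Let Y follow the univariate zero-inflated Poisson log-normal distribution ZIPLN(π, μ, σ²). Then the quantity Q₂(Y) := E[Y³] − 3·E[Y²] + 2·E[Y] satisfies Q₂(Y) = π·exp(3μ + (9/2)σ²) = π·Q₁(Y)³, where Q₁(Y) = E[Y²]/E[Y] − 1. -/
/-!
Both quantities are combinations of factorial moments. Since `y³ − 3y² + 2y = y(y−1)(y−2)`,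
`Q₂` is the third factorial moment and `Q₁ = E[Y(Y−1)]/E[Y]`. Conditionally on the Gaussian
variable `z`, a non-zero-inflated `Y` is Poisson with rate `λ = e^{μ+z}`, whose `k`-th factorial
moment is `λᵏ`; the zero-inflation component contributes nothing for `k ≥ 1`. Integrating
`e^{k(μ+z)}` against the Gaussian (its moment generating function) gives the `k`-th factorial
moment `π·exp(kμ + k²σ²/2)`, so `Q₂ = π·e^{3μ+9σ²/2}` and `Q₁ = e^{μ+3σ²/2}`.
-/

open MeasureTheory ProbabilityTheory Real

/-- The probability mass function of the univariate zero-inflated Poisson log-normal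
distribution ZIPLN(π, μ, σ²):
`p(y) = (1−π)·1{y=0} + π·∫ exp(−e^{μ+z})·e^{(μ+z)y}/y! dγ(z)`,
where `γ` is the centered Gaussian measure on ℝ with variance `σ²`.
Here `pr` plays the role of the zero-inflation probability π. -/
noncomputable def ziplnPMF (pr μ σ : ℝ) (y : ℕ) : ℝ :=
  (1 - pr) * (if y = 0 then 1 else 0) +
    pr * ∫ z, exp (-exp (μ + z)) * exp ((μ + z) * y) / (Nat.factorial y)
        ∂(gaussianReal 0 ⟨σ ^ 2, sq_nonneg σ⟩)

open Nat

theorem Nat.sq_eq_descFactorial_add (y : ℕ) :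
    y ^ 2 = y.descFactorial 2 + y.descFactorial 1 := by
  rcases y with _ | _ | n <;> simp [descFactorial_succ]
  ring

theorem Nat.pow_three_eq_descFactorial_add (y : ℕ) :
    y ^ 3 = y.descFactorial 3 + 3 * y.descFactorial 2 + y.descFactorial 1 := by
  rcases y with _ | _ | _ | n <;> simp [descFactorial_succ]
  ring

theorem hasSum_descFactorial_mul_pow_div_factorial (l : ℝ) (k : ℕ) :
    HasSum (fun y : ℕ => (y.descFactorial k : ℝ) * l ^ y / y !) (l ^ k * exp l) := by
  have hhead : ∑ i ∈ Finset.range k, (i.descFactorial k : ℝ) * l ^ i / i ! = 0 :=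
    Finset.sum_eq_zero fun i hi => by
      rw [descFactorial_of_lt (Finset.mem_range.mp hi), cast_zero, zero_mul, zero_div]
  refine (hasSum_nat_add_iff' k).mp ?_
  rw [hhead, sub_zero, exp_eq_exp_ℝ]
  refine ((NormedSpace.expSeries_div_hasSum_exp l).mul_left (l ^ k)).congr_fun fun n => ?_
  rw [add_descFactorial_eq_ascFactorial, ← factorial_mul_ascFactorial, pow_add]
  have : ((n + 1).ascFactorial k : ℝ) ≠ 0 := by exact_mod_cast (ascFactorial_pos _ _).ne'
  push_cast
  field_simp

theorem hasSum_descFactorial_mul_poisson (l : ℝ) (k : ℕ) :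
    HasSum (fun y : ℕ => (y.descFactorial k : ℝ) * (exp (-l) * l ^ y / y !)) (l ^ k) := by
  have hvalue : exp (-l) * (l ^ k * exp l) = l ^ k := by
    rw [mul_left_comm, ← exp_add, neg_add_cancel, exp_zero, mul_one]
  rw [← hvalue]
  exact ((hasSum_descFactorial_mul_pow_div_factorial l k).mul_left (exp (-l))).congr_fun
    fun y => by ring

theorem MeasureTheory.hasSum_integral_of_nonneg {α : Type*} [MeasurableSpace α] {μ : Measure α}
    {F : ℕ → α → ℝ} {f : α → ℝ} (hF_meas : ∀ n, AEStronglyMeasurable (F n) μ)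
    (hF_nonneg : ∀ n a, 0 ≤ F n a) (hF_sum : ∀ᵐ a ∂μ, HasSum (fun n => F n a) (f a))
    (hf : Integrable f μ) :
    HasSum (fun n => ∫ a, F n a ∂μ) (∫ a, f a ∂μ) := by
  refine hasSum_integral_of_dominated_convergence F hF_meas
    (fun n => ae_of_all _ fun a => (Real.norm_of_nonneg (hF_nonneg n a)).le)
    (hF_sum.mono fun a ha => ha.summable) ?_ hF_sum
  exact hf.congr (hF_sum.mono fun a ha => ha.tsum_eq.symm)

theorem ProbabilityTheory.integral_exp_mul_gaussianReal (m : ℝ) (v : NNReal) (t : ℝ) :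
    ∫ x, exp (t * x) ∂gaussianReal m v = exp (m * t + v * t ^ 2 / 2) :=
  congrFun mgf_fun_id_gaussianReal t

theorem Real.exp_add_pow (a b : ℝ) (k : ℕ) : exp (a + b) ^ k = exp (k * a) * exp (k * b) := by
  rw [← exp_nat_mul, mul_add, exp_add]

theorem ziplnPMF_of_ne_zero (pr μ σ : ℝ) {y : ℕ} (hy : y ≠ 0) :
    ziplnPMF pr μ σ y = pr * ∫ z, exp (-exp (μ + z)) * exp (μ + z) ^ y / (y ! : ℝ)
        ∂(gaussianReal 0 ⟨σ ^ 2, sq_nonneg σ⟩) := by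
  simp only [ziplnPMF, if_neg hy, mul_zero, zero_add, mul_comm _ (y : ℝ), exp_nat_mul]

theorem hasSum_descFactorial_mul_ziplnPMF (pr μ σ : ℝ) {k : ℕ} (hk : k ≠ 0) :
    HasSum (fun y : ℕ => (y.descFactorial k : ℝ) * ziplnPMF pr μ σ y)
      (pr * exp (k * μ + k ^ 2 * σ ^ 2 / 2)) := by
  set γ := gaussianReal 0 ⟨σ ^ 2, sq_nonneg σ⟩
  set F : ℕ → ℝ → ℝ := fun y z =>
    (y.descFactorial k : ℝ) * (exp (-exp (μ + z)) * exp (μ + z) ^ y / y !)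
  have hterm (y : ℕ) : (y.descFactorial k : ℝ) * ziplnPMF pr μ σ y = pr * ∫ z, F y z ∂γ := by
    rcases eq_or_ne y 0 with rfl | hy
    · simp [F, descFactorial_of_lt (Nat.pos_of_ne_zero hk)]
    · rw [ziplnPMF_of_ne_zero pr μ σ hy, mul_left_comm, ← integral_const_mul]
  have hmoment : ∫ z, exp (μ + z) ^ k ∂γ = exp (k * μ + k ^ 2 * σ ^ 2 / 2) := by
    simp_rw [exp_add_pow]
    rw [integral_const_mul, show ∫ z, exp (k * z) ∂γ = _ from integral_exp_mul_gaussianReal ..,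
      ← exp_add]
    congr 1
    -- `push_cast` does not see through the coercion of the anonymous constructor `⟨σ ^ 2, _⟩`
    change _ + (0 * _ + σ ^ 2 * _ / 2) = _
    ring
  have hint : HasSum (fun y => ∫ z, F y z ∂γ) (∫ z, exp (μ + z) ^ k ∂γ) := by
    refine hasSum_integral_of_nonneg (fun y => Continuous.aestronglyMeasurable (by fun_prop))
      (fun y z => by positivity) (ae_of_all _ fun z => hasSum_descFactorial_mul_poisson _ k) ?_
    simp only [exp_add_pow]
    exact (integrable_exp_mul_gaussianReal _).const_mul _
  rw [← hmoment]
  exact (hint.mul_left pr).congr_fun hterm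

section FactorialMoments

variable {p : ℕ → ℝ} {m₁ m₂ m₃ : ℝ}

theorem tsum_cast_mul_of_hasSum_descFactorial
    (h₁ : HasSum (fun y => (y.descFactorial 1 : ℝ) * p y) m₁) :
    ∑' y : ℕ, (y : ℝ) * p y = m₁ := by
  simpa using h₁.tsum_eq

theorem tsum_cast_sq_mul_of_hasSum_descFactorial
    (h₁ : HasSum (fun y => (y.descFactorial 1 : ℝ) * p y) m₁)
    (h₂ : HasSum (fun y => (y.descFactorial 2 : ℝ) * p y) m₂) :
    ∑' y : ℕ, (y : ℝ) ^ 2 * p y = m₂ + m₁ := by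
  refine ((h₂.add h₁).congr_fun fun y => ?_).tsum_eq
  rw [← add_mul]
  exact_mod_cast congrArg (· * p y) (congrArg (Nat.cast (R := ℝ)) (sq_eq_descFactorial_add y))

theorem tsum_cast_pow_three_mul_of_hasSum_descFactorial
    (h₁ : HasSum (fun y => (y.descFactorial 1 : ℝ) * p y) m₁)
    (h₂ : HasSum (fun y => (y.descFactorial 2 : ℝ) * p y) m₂)
    (h₃ : HasSum (fun y => (y.descFactorial 3 : ℝ) * p y) m₃) :
    ∑' y : ℕ, (y : ℝ) ^ 3 * p y = m₃ + 3 * m₂ + m₁ := by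
  refine (((h₃.add (h₂.mul_left 3)).add h₁).congr_fun fun y => ?_).tsum_eq
  rw [← mul_assoc, ← add_mul, ← add_mul]
  exact_mod_cast
    congrArg (· * p y) (congrArg (Nat.cast (R := ℝ)) (pow_three_eq_descFactorial_add y))

end FactorialMoments

theorem zipln_Q2_general (pr μ σ : ℝ) (hpr : pr ∈ Set.Ioc (0 : ℝ) 1)
    (Q₁ Q₂ : ℝ)
    (hQ₁ : Q₁ = (∑' y : ℕ, (y : ℝ) ^ 2 * ziplnPMF pr μ σ y)
        / (∑' y : ℕ, (y : ℝ) * ziplnPMF pr μ σ y) - 1)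
    (hQ₂ : Q₂ = (∑' y : ℕ, (y : ℝ) ^ 3 * ziplnPMF pr μ σ y)
        - 3 * (∑' y : ℕ, (y : ℝ) ^ 2 * ziplnPMF pr μ σ y)
        + 2 * (∑' y : ℕ, (y : ℝ) * ziplnPMF pr μ σ y)) :
    Q₂ = pr * exp (3 * μ + (9 / 2) * σ ^ 2) ∧ Q₂ = pr * Q₁ ^ 3 := by
  have h₁ := hasSum_descFactorial_mul_ziplnPMF pr μ σ one_ne_zero
  have h₂ := hasSum_descFactorial_mul_ziplnPMF pr μ σ two_ne_zero
  have h₃ := hasSum_descFactorial_mul_ziplnPMF pr μ σ three_ne_zero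
  rw [tsum_cast_pow_three_mul_of_hasSum_descFactorial h₁ h₂ h₃,
    tsum_cast_sq_mul_of_hasSum_descFactorial h₁ h₂,
    tsum_cast_mul_of_hasSum_descFactorial h₁] at hQ₂
  rw [tsum_cast_sq_mul_of_hasSum_descFactorial h₁ h₂,
    tsum_cast_mul_of_hasSum_descFactorial h₁] at hQ₁
  have hQ₂' : Q₂ = pr * exp (3 * μ + (9 / 2) * σ ^ 2) := by
    rw [hQ₂]
    ring_nf
  have hQ₁' : Q₁ = exp (μ + 3 / 2 * σ ^ 2) := by
    rw [hQ₁, add_div, div_self (mul_ne_zero hpr.1.ne' (exp_ne_zero _)), add_sub_cancel_right,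
      mul_div_mul_left _ _ hpr.1.ne', ← exp_sub]
    ring_nf
  refine ⟨hQ₂', ?_⟩
  rw [hQ₂', hQ₁', ← exp_nat_mul]
  ring_nf

/-- For a ZIPLN(π, μ, σ²) random variable, the quantity
`Q₂(Y) = E[Y³] − 3·E[Y²] + 2·E[Y]` equals `π·exp(3μ + (9/2)σ²) = π·Q₁(Y)³`,
where `Q₁(Y) = E[Y²]/E[Y] − 1`. -/
theorem zipln_Q2 (pr μ σ : ℝ) (hpr : pr ∈ Set.Ioc (0 : ℝ) 1) (hσ : 0 < σ)
    (Q₁ Q₂ : ℝ)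
    (hQ₁ : Q₁ = (∑' y : ℕ, (y : ℝ) ^ 2 * ziplnPMF pr μ σ y)
        / (∑' y : ℕ, (y : ℝ) * ziplnPMF pr μ σ y) - 1)
    (hQ₂ : Q₂ = (∑' y : ℕ, (y : ℝ) ^ 3 * ziplnPMF pr μ σ y)
        - 3 * (∑' y : ℕ, (y : ℝ) ^ 2 * ziplnPMF pr μ σ y)
        + 2 * (∑' y : ℕ, (y : ℝ) * ziplnPMF pr μ σ y)) :
    Q₂ = pr * exp (3 * μ + (9 / 2) * σ ^ 2) ∧ Q₂ = pr * Q₁ ^ 3 :=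
  zipln_Q2_general pr μ σ hpr Q₁ Q₂ hQ₁ hQ₂
end
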